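/- arXiv:1409.1549 — 4 statements merged into one kernel-verified Lean document; each statement's English description precedes it below -/
import Mathlib

section
/- Let P be a right LCM monoid. Define an equivalence relation on P × P by (p,q) ∼ (a,b) iff there exists a unit u ∈ U(P) with au = p and bu = q. Then the multiplication [a,b][c,d] = [ab', dc'] when cP ∩ bP = rP with bb' = cc' = r, and [a,b][c,d] = 0 when cP ∩ bP = ∅, is well-defined on equivalence classes. -/
/-- The principal right ideal `pP` of a monoid. -/
def rI {M : Type*} [Monoid M] (p : M) : Set M := {x | ∃ y, x = p * y}

/-- A right LCM monoid: left cancellative, and any two principal right ideals are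
either disjoint or intersect in another principal right ideal. -/
class RightLCM (M : Type*) extends Monoid M where
  mul_left_cancel' : ∀ a b c : M, a * b = a * c → b = c
  lcm : ∀ p q : M, rI p ∩ rI q = ∅ ∨ ∃ r : M, rI p ∩ rI q = rI r

namespace RightLCM

variable {M : Type*} [RightLCM M]

/-- The equivalence relation `(p,q) ∼ (pu,qu)` for units `u`. -/
def peq (x y : M × M) : Prop := ∃ u : M, IsUnit u ∧ x.1 = y.1 * u ∧ x.2 = y.2 * u

theorem peq_equivalence : Equivalence (peq (M := M)) := by
  constructor
  · intro x; exact ⟨1, isUnit_one, by simp, by simp⟩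
  · rintro x y ⟨u, hu, h1, h2⟩
    obtain ⟨w, hw⟩ := hu
    subst hw
    exact ⟨↑w⁻¹, Units.isUnit _, by rw [h1, mul_assoc, w.mul_inv, mul_one],
      by rw [h2, mul_assoc, w.mul_inv, mul_one]⟩
  · rintro x y z ⟨u, hu, h1, h2⟩ ⟨v, hv, h3, h4⟩
    exact ⟨v * u, hv.mul hu, by rw [h1, h3, mul_assoc], by rw [h2, h4, mul_assoc]⟩

instance pSetoid : Setoid (M × M) := ⟨peq, peq_equivalence⟩

/-- The inverse semigroup `S = {[p,q] : p,q ∈ P} ∪ {0}` associated to a right LCM monoid. -/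
abbrev S (M : Type*) [RightLCM M] := WithZero (Quotient (pSetoid (M := M)))

/-- The class `[p,q]` as an element of `S M`. -/
def cls (p q : M) : S M := (Quotient.mk (pSetoid (M := M)) (p, q) : Quotient (pSetoid (M := M)))

open scoped Classical in
/-- Product of two representatives: `[a,b][c,d] = [ab', dc']` when `bP ∩ cP = rP` with
`bb' = cc' = r`, and `0` when `bP ∩ cP = ∅`. -/
noncomputable def mulPair (x y : M × M) : S M :=
  if h : rI x.2 ∩ rI y.1 = ∅ then 0
  else
    have hr := (RightLCM.lcm x.2 y.1).resolve_left h
    have hmem : Classical.choose hr ∈ rI x.2 ∩ rI y.1 :=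
      (Set.ext_iff.mp (Classical.choose_spec hr) _).mpr ⟨1, (mul_one _).symm⟩
    cls (x.1 * Classical.choose hmem.1) (y.2 * Classical.choose hmem.2)

/-- The multiplication on `S M` (with `0` absorbing). -/
noncomputable def smul : S M → S M → S M
  | none, _ => 0
  | some _, none => 0
  | some a, some b => mulPair a.out b.out

/-- The involution `[p,q]* = [q,p]` on `S M`. -/
noncomputable def star : S M → S M
  | none => 0
  | some a => cls a.out.2 a.out.1

end RightLCM

/-!
Whether `bP ∩ cP` is empty depends only on the right ideals `bP` and `cP`, which do not change
when `b` and `c` are multiplied on the right by units. When it is `rP`, left cancellation shows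
that a generator is determined up to a unit and that `b'`, `c'` are then determined by it, so the
class `[ab', dc']` does not depend on the choice of `r`. Replacing `(a, b)` by `(au, bu)` and
`(c, d)` by `(cv, dv)` keeps `r` a generator, with cofactors `u⁻¹b'` and `v⁻¹c'`, which leaves
`ab'` and `dc'` unchanged.
-/

lemma mem_rI_self {M : Type*} [Monoid M] (p : M) : p ∈ rI p :=
  ⟨1, (mul_one p).symm⟩

lemma rI_mul_of_isUnit {M : Type*} [Monoid M] (p : M) {u : M} (hu : IsUnit u) :
    rI (p * u) = rI p := by
  obtain ⟨w, rfl⟩ := hu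
  ext x
  constructor
  · rintro ⟨y, rfl⟩
    exact ⟨w * y, mul_assoc _ _ _⟩
  · rintro ⟨y, rfl⟩
    exact ⟨↑w⁻¹ * y, by rw [mul_assoc, Units.mul_inv_cancel_left]⟩

lemma exists_isUnit_of_rI_eq {M : Type*} [Monoid M] [IsLeftCancelMul M] {r r' : M}
    (h : rI r = rI r') : ∃ s : M, IsUnit s ∧ r = r' * s := by
  obtain ⟨s, hs⟩ : r ∈ rI r' := h ▸ mem_rI_self r
  obtain ⟨t, ht⟩ : r' ∈ rI r := h ▸ mem_rI_self r'
  have hst : s * t = 1 := mul_left_cancel (a := r') (by rw [← mul_assoc, ← hs, ← ht, mul_one])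
  have hts : t * s = 1 := mul_left_cancel (a := r) (by rw [← mul_assoc, ← ht, ← hs, mul_one])
  exact ⟨s, ⟨⟨s, t, hst, hts⟩, rfl⟩, hs⟩

namespace RightLCM

variable {M : Type*} [RightLCM M]

instance : IsLeftCancelMul M :=
  ⟨fun a _ _ h => mul_left_cancel' a _ _ h⟩

lemma cls_eq_of_peq {p q p' q' : M} (h : peq (p, q) (p', q')) : cls p q = cls p' q' :=
  congrArg _ (Quotient.sound h)

lemma mulPair_of_inter_eq_empty {x y : M × M} (h : rI x.2 ∩ rI y.1 = ∅) : mulPair x y = 0 :=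
  dif_pos h

lemma exists_mulPair_eq_cls {x y : M × M} (h : rI x.2 ∩ rI y.1 ≠ ∅) :
    ∃ r b c : M, r = x.2 * b ∧ r = y.1 * c ∧ rI x.2 ∩ rI y.1 = rI r ∧
      mulPair x y = cls (x.1 * b) (y.2 * c) := by
  have hr := (RightLCM.lcm x.2 y.1).resolve_left h
  have hmem : Classical.choose hr ∈ rI x.2 ∩ rI y.1 :=
    (Classical.choose_spec hr).ge (mem_rI_self _)
  exact ⟨Classical.choose hr, Classical.choose hmem.1, Classical.choose hmem.2,
    Classical.choose_spec hmem.1, Classical.choose_spec hmem.2, Classical.choose_spec hr,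
    dif_neg h⟩

lemma mulPair_eq_cls {x y : M × M} {r b c : M} (hr : rI x.2 ∩ rI y.1 = rI r)
    (hb : r = x.2 * b) (hc : r = y.1 * c) : mulPair x y = cls (x.1 * b) (y.2 * c) := by
  have hne : rI x.2 ∩ rI y.1 ≠ ∅ :=
    hr ▸ Set.nonempty_iff_ne_empty.mp ⟨r, mem_rI_self r⟩
  obtain ⟨r', b', c', hb', hc', hr', heq⟩ := exists_mulPair_eq_cls hne
  obtain ⟨s, hs, hrs⟩ := exists_isUnit_of_rI_eq (hr'.symm.trans hr)
  have hbs : b' = b * s := mul_left_cancel (a := x.2) (by rw [← hb', hrs, hb, mul_assoc])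
  have hcs : c' = c * s := mul_left_cancel (a := y.1) (by rw [← hc', hrs, hc, mul_assoc])
  rw [heq, hbs, hcs]
  exact cls_eq_of_peq ⟨s, hs, (mul_assoc _ _ _).symm, (mul_assoc _ _ _).symm⟩

end RightLCM

open RightLCM in
/-- The multiplication `[a,b][c,d] = [ab', dc']` (resp. `0`) is well-defined on
equivalence classes of pairs. -/
theorem stmt2 {M : Type*} [RightLCM M] (x x' y y' : M × M)
    (hx : peq x x') (hy : peq y y') :
    mulPair x y = mulPair x' y' := by
  obtain ⟨u, hu, hx1, hx2⟩ := hx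
  obtain ⟨v, hv, hy1, hy2⟩ := hy
  have hI : rI x.2 ∩ rI y.1 = rI x'.2 ∩ rI y'.1 := by
    rw [hx2, hy1, rI_mul_of_isUnit _ hu, rI_mul_of_isUnit _ hv]
  rcases RightLCM.lcm x.2 y.1 with h | ⟨r, hr⟩
  · rw [mulPair_of_inter_eq_empty h, mulPair_of_inter_eq_empty (hI ▸ h)]
  · obtain ⟨⟨b, hb⟩, ⟨c, hc⟩⟩ : r ∈ rI x.2 ∩ rI y.1 := hr ▸ mem_rI_self r
    rw [mulPair_eq_cls hr hb hc, hx1, hy2, mul_assoc, mul_assoc]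
    exact (mulPair_eq_cls (hI ▸ hr) (by rw [hb, hx2, mul_assoc])
      (by rw [hc, hy1, mul_assoc])).symm
end

section
/- Let P be a right LCM monoid with core P_0. If p, q ∈ P_0 and pP ∩ qP = rP, then r ∈ P_0. -/
/-- The core of a monoid: elements whose principal right ideal meets every
principal right ideal. -/
def core (M : Type*) [Monoid M] : Set M := {p | ∀ q : M, (rI p ∩ rI q).Nonempty}

/-- Since `pP ∩ sP` is nonempty it is some principal ideal `tP`, which `qP` meets. -/
theorem rI_inter_rI_inter_rI_nonempty_of_mem_core {M : Type*} [Monoid M]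
    (hlcm : ∀ p q : M, rI p ∩ rI q = ∅ ∨ ∃ t : M, rI p ∩ rI q = rI t)
    {p q : M} (hp : p ∈ core M) (hq : q ∈ core M) (s : M) :
    (rI p ∩ rI q ∩ rI s).Nonempty := by
  obtain ⟨t, ht⟩ := (hlcm p s).resolve_left (hp s).ne_empty
  obtain ⟨x, hxq, hxt⟩ := hq t
  rw [← ht] at hxt
  exact ⟨x, ⟨hxt.1, hxq⟩, hxt.2⟩

theorem stmt8_general {M : Type*} [Monoid M]
    (hlcm : ∀ p q : M, rI p ∩ rI q = ∅ ∨ ∃ t : M, rI p ∩ rI q = rI t) :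
    ∀ p ∈ core M, ∀ q ∈ core M, ∀ r : M, rI p ∩ rI q = rI r → r ∈ core M := by
  intro p hp q hq r hr s
  rw [← hr]
  exact rI_inter_rI_inter_rI_nonempty_of_mem_core hlcm hp hq s

/-- In a right LCM monoid, if `p, q` are in the core and `pP ∩ qP = rP`, then `r`
is in the core. -/
theorem stmt8 {M : Type*} [Monoid M]
    (hlc : ∀ a b c : M, a * b = a * c → b = c)
    (hlcm : ∀ p q : M, rI p ∩ rI q = ∅ ∨ ∃ t : M, rI p ∩ rI q = rI t) :
    ∀ p ∈ core M, ∀ q ∈ core M, ∀ r : M, rI p ∩ rI q = rI r → r ∈ core M :=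
  stmt8_general hlcm
end

section
/- Let (G, X) be a self-similar group with X finite, and let X* ⋈ G be the Zappa–Szép product monoid with multiplication (α, g)(β, h) = (α (g·β), (g|_β) h). If (α, g) and (α', h) meet in X* ⋈ G (i.e., some (γ,k) satisfies (α,g)(γ,k) = (α',h)(γ,k)), then α = α' and γ is strongly fixed by g^{-1}h, i.e., (g^{-1}h)·γ = γ and (g^{-1}h)|_γ = 1_G. -/
/-- A self-similar group `(G, X)`: a length-preserving action of `G` on the free
monoid `X*` (words modeled as lists) together with restriction maps, satisfying the
self-similarity identities `g·(uv) = (g·u)(g|_u · v)`, `g|_{uv} = (g|_u)|_v`, etc. -/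
structure SelfSimilar (G X : Type*) [Group G] where
  act : G → List X → List X
  res : G → List X → G
  length_act : ∀ (g : G) (w : List X), (act g w).length = w.length
  act_one : ∀ w : List X, act 1 w = w
  act_mul : ∀ (g h : G) (w : List X), act (g * h) w = act g (act h w)
  act_append : ∀ (g : G) (u v : List X), act g (u ++ v) = act g u ++ act (res g u) v
  res_nil : ∀ g : G, res g [] = g
  res_append : ∀ (g : G) (u v : List X), res g (u ++ v) = res (res g u) v
  res_one : ∀ w : List X, res 1 w = 1
  res_mul : ∀ (g h : G) (w : List X), res (g * h) w = res g (act h w) * res h w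

/-- The multiplication of the Zappa–Szép product `X* ⋈ G`:
`(α, g)(β, h) = (α (g·β), (g|_β) h)`. -/
def zmul {G X : Type*} [Group G] (SS : SelfSimilar G X) (x y : List X × G) : List X × G :=
  (x.1 ++ SS.act x.2 y.1, SS.res x.2 y.1 * y.2)

/-! Both coordinates of `(α, g)(γ, k) = (α', h)(γ, k)` can be cancelled: since `g·γ` and `h·γ`
have the same length, the words give `α = α'` and `g·γ = h·γ`, and the group coordinates give
`g|_γ = h|_γ`. As `g` acts invertibly, `g·γ = h·γ` says `g⁻¹h` fixes `γ`, and then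
`(g⁻¹h)|_γ = g⁻¹|_{g·γ} · h|_γ = (g|_γ)⁻¹ · h|_γ = 1`. -/

namespace SelfSimilar

variable {G X : Type*} [Group G] (SS : SelfSimilar G X)

theorem act_inv_act (g : G) (w : List X) : SS.act g⁻¹ (SS.act g w) = w := by
  rw [← SS.act_mul, inv_mul_cancel, SS.act_one]

theorem res_inv_act (g : G) (w : List X) : SS.res g⁻¹ (SS.act g w) = (SS.res g w)⁻¹ := by
  rw [eq_inv_iff_mul_eq_one, ← SS.res_mul, inv_mul_cancel, SS.res_one]

theorem act_inv_mul_eq_self {g h : G} {w : List X} (hact : SS.act g w = SS.act h w) :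
    SS.act (g⁻¹ * h) w = w := by
  rw [SS.act_mul, ← hact, SS.act_inv_act]

theorem res_inv_mul_eq_one {g h : G} {w : List X} (hact : SS.act g w = SS.act h w)
    (hres : SS.res g w = SS.res h w) : SS.res (g⁻¹ * h) w = 1 := by
  rw [SS.res_mul, ← hact, SS.res_inv_act, hres, inv_mul_cancel]

theorem eq_of_zmul_eq_zmul {α α' γ : List X} {g h k : G}
    (hmeet : zmul SS (α, g) (γ, k) = zmul SS (α', h) (γ, k)) :
    α = α' ∧ SS.act g γ = SS.act h γ ∧ SS.res g γ = SS.res h γ := by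
  simp only [zmul, Prod.mk.injEq] at hmeet
  obtain ⟨hword, hgroup⟩ := hmeet
  have hlen : (SS.act g γ).length = (SS.act h γ).length := by
    rw [SS.length_act, SS.length_act]
  obtain ⟨hα, hact⟩ := List.append_inj hword (by simpa [hlen] using congrArg List.length hword)
  exact ⟨hα, hact, mul_right_cancel hgroup⟩

end SelfSimilar

/-- If `(α, g)` and `(α', h)` meet in `X* ⋈ G`, i.e. `(α,g)(γ,k) = (α',h)(γ,k)` for
some `(γ,k)`, then `α = α'` and `γ` is strongly fixed by `g⁻¹h`. -/
theorem stmt16 {G X : Type*} [Group G] (SS : SelfSimilar G X)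
    (α α' γ : List X) (g h k : G)
    (hmeet : zmul SS (α, g) (γ, k) = zmul SS (α', h) (γ, k)) :
    α = α' ∧ SS.act (g⁻¹ * h) γ = γ ∧ SS.res (g⁻¹ * h) γ = 1 := by
  obtain ⟨hα, hact, hres⟩ := SS.eq_of_zmul_eq_zmul hmeet
  exact ⟨hα, SS.act_inv_mul_eq_self hact, SS.res_inv_mul_eq_one hact hres⟩
end

section
/- Let (G, X) be a self-similar group and g ∈ G. Suppose there is a finite set F of words strongly fixed by g such that every word strongly fixed by g has a common right extension with some element of F (i.e., for all α ∈ SF_g there is β ∈ F with βX* ∩ αX* ≠ ∅). Then the set MSF_g of minimal strongly fixed words of g is finite. Conversely, if MSF_g is finite then such a finite set F exists. -/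
/-- The principal right ideal `αX*` of the free monoid of words over `X`. -/
def rIw {X : Type*} (α : List X) : Set (List X) := {w | ∃ v, w = α ++ v}

/-- The set of words strongly fixed by `g`: `g·α = α` and `g|_α = 1`. -/
def SF {G X : Type*} [Group G] (SS : SelfSimilar G X) (g : G) : Set (List X) :=
  {α | SS.act g α = α ∧ SS.res g α = 1}

/-- The set of minimal strongly fixed words of `g`: strongly fixed words no proper
prefix of which is strongly fixed. -/
def MSF {G X : Type*} [Group G] (SS : SelfSimilar G X) (g : G) : Set (List X) :=
  {α | α ∈ SF SS g ∧ ∀ β : List X, β <+: α → β ≠ α → β ∉ SF SS g}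

/-!
Two words have a common right extension iff one is a prefix of the other. A minimal strongly
fixed word comparable with a strongly fixed word `β` cannot extend `β` properly, so it is a prefix
of `β`: hence `MSF_g` lies in the finite set of prefixes of members of `F`. Conversely every
strongly fixed word has a minimal strongly fixed prefix, so `F = MSF_g` works.
-/

theorem List.finite_setOf_prefix {X : Type*} (β : List X) : {α : List X | α <+: β}.Finite :=
  β.inits.finite_toSet.subset fun α hα => (List.mem_inits α β).mpr hα

theorem rIw_inter_rIw_nonempty_iff {X : Type*} {α β : List X} :
    (rIw α ∩ rIw β).Nonempty ↔ α <+: β ∨ β <+: α := by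
  constructor
  · rintro ⟨w, ⟨u, rfl⟩, v, hv⟩
    exact List.prefix_or_prefix_of_prefix (List.prefix_append α u) ⟨v, hv.symm⟩
  · rintro (⟨u, rfl⟩ | ⟨u, rfl⟩)
    · exact ⟨α ++ u, ⟨u, rfl⟩, [], (List.append_nil _).symm⟩
    · exact ⟨β ++ u, ⟨[], (List.append_nil _).symm⟩, u, rfl⟩

namespace SelfSimilar

variable {G X : Type*} [Group G] (SS : SelfSimilar G X) (g : G)

theorem exists_prefix_mem_MSF {α : List X} (hα : α ∈ SF SS g) :
    ∃ β ∈ MSF SS g, β <+: α := by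
  by_cases hmin : ∀ β, β <+: α → β ≠ α → β ∉ SF SS g
  · exact ⟨α, ⟨hα, hmin⟩, List.prefix_refl α⟩
  push Not at hmin
  obtain ⟨β, hβα, hne, hβ⟩ := hmin
  have : β.length < α.length :=
    lt_of_le_of_ne hβα.length_le fun h => hne (hβα.eq_of_length h)
  obtain ⟨γ, hγ, hγβ⟩ := exists_prefix_mem_MSF hβ
  exact ⟨γ, hγ, hγβ.trans hβα⟩
termination_by α.length

theorem prefix_of_mem_MSF_of_mem_SF {α β : List X} (hα : α ∈ MSF SS g) (hβ : β ∈ SF SS g)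
    (hcommon : (rIw β ∩ rIw α).Nonempty) : α <+: β := by
  rcases rIw_inter_rIw_nonempty_iff.mp hcommon with hβα | hαβ
  · by_cases h : β = α
    · exact h ▸ List.prefix_refl β
    · exact absurd hβ (hα.2 β hβα h)
  · exact hαβ

end SelfSimilar

/-- There is a finite set `F` of strongly fixed words of `g` such that every strongly
fixed word of `g` has a common right multiple with some member of `F`, if and only if
the set of minimal strongly fixed words of `g` is finite. -/
theorem stmt18 {G X : Type*} [Group G] (SS : SelfSimilar G X) (g : G) :
    (∃ F : Finset (List X), (∀ β ∈ F, β ∈ SF SS g) ∧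
      ∀ α ∈ SF SS g, ∃ β ∈ F, (rIw β ∩ rIw α) ≠ ∅) ↔ (MSF SS g).Finite := by
  constructor
  · rintro ⟨F, hFsf, hF⟩
    refine (F.finite_toSet.biUnion fun β _ => List.finite_setOf_prefix β).subset fun α hα => ?_
    obtain ⟨β, hβF, hβα⟩ := hF α hα.1
    exact Set.mem_biUnion hβF
      (SelfSimilar.prefix_of_mem_MSF_of_mem_SF SS g hα (hFsf β hβF) (Set.nonempty_iff_ne_empty.mpr hβα))
  · intro hfin
    refine ⟨hfin.toFinset, fun β hβ => (hfin.mem_toFinset.mp hβ).1, fun α hα => ?_⟩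
    obtain ⟨β, hβ, hβα⟩ := SelfSimilar.exists_prefix_mem_MSF SS g hα
    exact ⟨β, hfin.mem_toFinset.mpr hβ,
      Set.nonempty_iff_ne_empty.mp (rIw_inter_rIw_nonempty_iff.mpr (Or.inl hβα))⟩
end
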